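/- Let E, Z, X be real normed vector spaces, let i : E → Z be a compact continuous linear operator, and let j : Z → X be an injective continuous linear operator. Then for every ε > 0 there exists a constant C ≥ 0 such that ‖i f‖_Z ≤ ε ‖f‖_E + C ‖j (i f)‖_X for all f ∈ E. -/
import Mathlib


/-- **Ehrling's lemma.** If `i : E → Z` is a compact continuous linear operator and
`j : Z → X` is an injective continuous linear operator, then for every `ε > 0` there is
`C ≥ 0` with `‖i f‖ ≤ ε ‖f‖ + C ‖j (i f)‖` for all `f`. -/
theorem ehrling_lemma {E Z X : Type*}
    [NormedAddCommGroup E] [NormedSpace ℝ E]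
    [NormedAddCommGroup Z] [NormedSpace ℝ Z]
    [NormedAddCommGroup X] [NormedSpace ℝ X]
    (i : E →L[ℝ] Z) (hi : IsCompactOperator i)
    (j : Z →L[ℝ] X) (hj : Function.Injective j) :
    ∀ ε > (0 : ℝ), ∃ C ≥ (0 : ℝ), ∀ f : E,
      ‖i f‖ ≤ ε * ‖f‖ + C * ‖j (i f)‖ := by
  intro ε hε
  by_contra h
  push_neg at h
  choose f hf using fun n : ℕ => h n (Nat.cast_nonneg n)
  have hf0 : ∀ n, f n ≠ 0 := by
    intro n hn
    have := hf n
    rw [hn] at this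
    simp at this
  set g : ℕ → E := fun n => ‖f n‖⁻¹ • f n with hg
  have hgnorm : ∀ n, ‖g n‖ = 1 := fun n => norm_smul_inv_norm (hf0 n)
  have hig : ∀ n : ℕ, ε + n * ‖j (i (g n))‖ < ‖i (g n)‖ := by
    intro n
    have hp : 0 < ‖f n‖ := norm_pos_iff.mpr (hf0 n)
    have h1 : ε * ‖f n‖ + n * ‖j (i (f n))‖ < ‖i (f n)‖ := hf n
    have h2 : ‖f n‖⁻¹ * (ε * ‖f n‖ + n * ‖j (i (f n))‖) < ‖f n‖⁻¹ * ‖i (f n)‖ :=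
      (mul_lt_mul_iff_right₀ (inv_pos.mpr hp)).mpr h1
    have e1 : ‖i (g n)‖ = ‖f n‖⁻¹ * ‖i (f n)‖ := by
      simp [hg, map_smul, norm_smul, abs_of_nonneg (inv_nonneg.mpr hp.le)]
    have e2 : ‖j (i (g n))‖ = ‖f n‖⁻¹ * ‖j (i (f n))‖ := by
      simp [hg, map_smul, norm_smul, abs_of_nonneg (inv_nonneg.mpr hp.le)]
    rw [e1, e2]
    calc ε + n * (‖f n‖⁻¹ * ‖j (i (f n))‖)
        = ‖f n‖⁻¹ * (ε * ‖f n‖ + n * ‖j (i (f n))‖) := by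
          field_simp
      _ < ‖f n‖⁻¹ * ‖i (f n)‖ := h2
  -- the j-norms tend to zero
  have hjnorm : ∀ n : ℕ, (n : ℝ) * ‖j (i (g n))‖ ≤ ‖i‖ := by
    intro n
    have := hig n
    have h2 : ‖i (g n)‖ ≤ ‖i‖ := by
      have := i.le_opNorm (g n)
      rwa [hgnorm n, mul_one] at this
    nlinarith [norm_nonneg (j (i (g n)))]
  have hjto : Filter.Tendsto (fun n : ℕ => ‖j (i (g n))‖) Filter.atTop (nhds 0) := by
    apply squeeze_zero (g := fun n : ℕ => (‖i‖ + ‖j‖ * ‖i‖) * (1 / (n + 1)))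
      (fun n => norm_nonneg _)
    · intro n
      have h1 := hjnorm n
      have hn : (0:ℝ) < n + 1 := by positivity
      rw [mul_one_div, le_div_iff₀ hn]
      have h2 : ‖j (i (g n))‖ ≤ ‖j‖ * ‖i‖ := by
        calc ‖j (i (g n))‖ ≤ ‖j‖ * ‖i (g n)‖ := j.le_opNorm _
          _ ≤ ‖j‖ * ‖i‖ := by
              have h3 : ‖i (g n)‖ ≤ ‖i‖ := by
                have := i.le_opNorm (g n)
                rwa [hgnorm n, mul_one] at this
              exact mul_le_mul_of_nonneg_left h3 (norm_nonneg _)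
      nlinarith
    · simpa using tendsto_one_div_add_atTop_nhds_zero_nat.const_mul (‖i‖ + ‖j‖ * ‖i‖)
  -- compactness
  obtain ⟨K, hK, hKmem⟩ := hi
  obtain ⟨r, hr, hball⟩ := Metric.mem_nhds_iff.mp hKmem
  set u : ℕ → E := fun n => (r / 2) • g n with hu
  have hunorm : ∀ n, ‖u n‖ = r / 2 := by
    intro n
    simp [hu, norm_smul, hgnorm, abs_of_pos hr]
  have huK : ∀ n, i (u n) ∈ K := by
    intro n
    apply hball
    simp [Metric.mem_ball, dist_zero_right, hunorm n]
    linarith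
  obtain ⟨z, hzK, φ, hφ, hto⟩ := hK.tendsto_subseq huK
  -- j z = 0
  have hjz : Filter.Tendsto (fun n : ℕ => j (i (u (φ n)))) Filter.atTop (nhds (j z)) :=
    (j.continuous.tendsto z).comp hto
  have hjz0 : Filter.Tendsto (fun n : ℕ => j (i (u (φ n)))) Filter.atTop (nhds 0) := by
    have h1 : Filter.Tendsto (fun n : ℕ => ‖j (i (u n))‖) Filter.atTop (nhds 0) := by
      have : (fun n : ℕ => ‖j (i (u n))‖) = fun n => (r / 2) * ‖j (i (g n))‖ := by
        funext n
        simp [hu, map_smul, norm_smul, abs_of_pos hr]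
      rw [this]
      simpa using hjto.const_mul (r / 2)
    have h2 := h1.comp hφ.tendsto_atTop
    exact tendsto_zero_iff_norm_tendsto_zero.mpr h2
  have hz0 : z = 0 := hj (by rw [tendsto_nhds_unique hjz hjz0, map_zero])
  -- but ‖i (u n)‖ ≥ (r/2) ε
  have hlow : ∀ n, (r / 2) * ε ≤ ‖i (u (φ n))‖ := by
    intro n
    have := hig (φ n)
    have e : ‖i (u (φ n))‖ = (r / 2) * ‖i (g (φ n))‖ := by
      simp [hu, map_smul, norm_smul, abs_of_pos hr]
    rw [e]
    have hε' : ε ≤ ‖i (g (φ n))‖ := by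
      nlinarith [(Nat.cast_nonneg (φ n) : (0:ℝ) ≤ (φ n : ℕ)), norm_nonneg (j (i (g (φ n))))]
    nlinarith
  have hnto : Filter.Tendsto (fun n : ℕ => ‖i (u (φ n))‖) Filter.atTop (nhds ‖z‖) :=
    (continuous_norm.tendsto z).comp hto
  have : (r / 2) * ε ≤ ‖z‖ := le_of_tendsto_of_tendsto' tendsto_const_nhds hnto hlow
  rw [hz0, norm_zero] at this
  nlinarith
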